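/- Let n ≥ 1 and let f be a continuous nonnegative real-valued function on n×n real matrices. Suppose that for every open set M₁ ⊆ ℝⁿ, every map φ : ℝⁿ → ℝⁿ that is injective on M₁ and differentiable at every x ∈ M₁ with invertible derivative Dφ(x), and every map ψ restricting to the inverse of φ on M₂ = φ(M₁) and differentiable there with Dψ(φ(x)) = (Dφ(x))⁻¹, the equality of Lebesgue integrals ∫_{M₁} f(Dφ(x)) dx = ∫_{M₂} f(Dψ(y)) dy holds. Then f satisfies the symmetry condition: f(J) = |det J| · f(J⁻¹) for every invertible matrix J. -/

import Mathlib

open MeasureTheory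

/-!
Test the energy identity on the linear map `x ↦ J x` over the unit ball `B`. Both derivatives
are constant, so the identity reads `f J · vol B = f J⁻¹ · vol (J B) = f J⁻¹ · |det J| · vol B`,
and `0 < vol B < ∞` lets us cancel the volume.
-/

theorem Matrix.toLin'_nonsing_inv_apply_toLin' {ι R : Type*} [Fintype ι] [DecidableEq ι]
    [CommRing R] {J : Matrix ι ι R} (hJ : IsUnit J.det) (x : ι → R) :
    J⁻¹.toLin' (J.toLin' x) = x := by
  rw [← Matrix.toLin'_mul_apply, Matrix.nonsing_inv_mul J hJ, Matrix.toLin'_one,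
    LinearMap.id_apply]

theorem MeasureTheory.Measure.addHaar_image_toLin' {ι : Type*} [Fintype ι] [DecidableEq ι]
    (μ : Measure (ι → ℝ)) [μ.IsAddHaarMeasure] (J : Matrix ι ι ℝ) (s : Set (ι → ℝ)) :
    μ (J.toLin' '' s) = ENNReal.ofReal |J.det| * μ s := by
  rw [μ.addHaar_image_linearMap, LinearMap.det_toLin']

theorem ENNReal.eq_mul_of_ofReal_mul_eq_ofReal_mul {a b c : ℝ} {m : ENNReal}
    (hm₀ : m ≠ 0) (hm : m ≠ ⊤) (ha : 0 ≤ a) (hb : 0 ≤ b) (hc : 0 ≤ c)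
    (h : ENNReal.ofReal a * m = ENNReal.ofReal b * (ENNReal.ofReal c * m)) :
    a = c * b := by
  rw [← mul_assoc, ENNReal.mul_left_inj hm₀ hm, ← ENNReal.ofReal_mul hb] at h
  rw [(ENNReal.ofReal_eq_ofReal_iff ha (mul_nonneg hb hc)).mp h, mul_comm]

theorem statement_1 (n : ℕ)
    (f : Matrix (Fin n) (Fin n) ℝ → ℝ)
    (hf_nonneg : ∀ A, 0 ≤ f A)
    (h_energy : ∀ (M₁ M₂ : Set (Fin n → ℝ)), IsOpen M₁ →
      ∀ (φ ψ : (Fin n → ℝ) → (Fin n → ℝ))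
        (φ' ψ' : (Fin n → ℝ) → ((Fin n → ℝ) →L[ℝ] (Fin n → ℝ))),
      Set.InjOn φ M₁ →
      (∀ x ∈ M₁, HasFDerivAt φ (φ' x) x) →
      (∀ x ∈ M₁, IsUnit (LinearMap.toMatrix' (φ' x).toLinearMap).det) →
      M₂ = φ '' M₁ →
      (∀ x ∈ M₁, ψ (φ x) = x) →
      (∀ y ∈ M₂, HasFDerivAt ψ (ψ' y) y) →
      (∀ x ∈ M₁,
        LinearMap.toMatrix' (ψ' (φ x)).toLinearMap =
          (LinearMap.toMatrix' (φ' x).toLinearMap)⁻¹) →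
      ∫⁻ x in M₁, ENNReal.ofReal (f (LinearMap.toMatrix' (φ' x).toLinearMap)) =
      ∫⁻ y in M₂, ENNReal.ofReal (f (LinearMap.toMatrix' (ψ' y).toLinearMap))) :
    ∀ J : Matrix (Fin n) (Fin n) ℝ, IsUnit J.det →
      f J = |J.det| * f J⁻¹ := by
  intro J hJ
  set B : Set (Fin n → ℝ) := Metric.ball 0 1
  set L := LinearMap.toContinuousLinearMap (Matrix.toLin' J)
  set Li := LinearMap.toContinuousLinearMap (Matrix.toLin' J⁻¹)
  have hLi : ∀ x, Li (L x) = x := Matrix.toLin'_nonsing_inv_apply_toLin' hJ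
  have hL : LinearMap.toMatrix' L.toLinearMap = J := by simp [L]
  have hLi' : LinearMap.toMatrix' Li.toLinearMap = J⁻¹ := by simp [Li]
  have key := h_energy B (L '' B) Metric.isOpen_ball L Li (fun _ => L) (fun _ => Li)
    (Function.LeftInverse.injective hLi).injOn (fun _ _ => L.hasFDerivAt)
    (fun _ _ => hL ▸ hJ) rfl (fun x _ => hLi x) (fun _ _ => Li.hasFDerivAt)
    (fun _ _ => by rw [hL, hLi'])
  rw [hL, hLi', setLIntegral_const, setLIntegral_const] at key
  exact ENNReal.eq_mul_of_ofReal_mul_eq_ofReal_mul (Metric.measure_ball_pos _ _ one_pos).ne'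
    measure_ball_lt_top.ne (hf_nonneg _) (hf_nonneg _) (abs_nonneg _)
    (key.trans (congrArg _ (volume.addHaar_image_toLin' J B)))
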